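/- Context lemma for the non-deterministic simply-typed λY-calculus with tree constants: for open terms x₁:κ₁,…,x_n:κ_n ⊢ u, u' : κ with κ = κ_{n+1} → ⋯ → κ_ℓ → o, the observational preorder u ≲ u' (defined via all closing contexts of base type, with trees compared up to ∼ᵥ) holds if and only if for all closed argument terms U₁,…,U_ℓ of the respective types and every tree π with (λx₁…λx_n.u) U₁ ⋯ U_ℓ →* π, there exists π' with (λx₁…λx_n.u') U₁ ⋯ U_ℓ →* π' and π ∼ᵥ π'. -/

import Mathlib

/-- Sorts (simple types): κ ::= o | κ₁ → κ₂. -/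
inductive STy where
  | o : STy
  | arr : STy → STy → STy
deriving DecidableEq

/-- The sort o → ⋯ → o → o with n arguments. -/
def tyOfArity : Nat → STy
  | 0 => .o
  | n + 1 => .arr .o (tyOfArity n)

/-- De Bruijn variables: proofs of membership of a sort in a context. -/
inductive Lk : List STy → STy → Type where
  | hd {Γ κ} : Lk (κ :: Γ) κ
  | tl {Γ κ κ'} : Lk Γ κ → Lk (κ' :: Γ) κ

/-- Intrinsically typed λY-terms over tree constructors α (with arities ar),
    with a binary non-deterministic choice +_κ and fixpoint combinators Y_κ at
    every sort. -/
inductive LTm (α : Type) (ar : α → Nat) : List STy → STy → Type where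
  | var {Γ κ} : Lk Γ κ → LTm α ar Γ κ
  | lam {Γ κ₁ κ₂} : LTm α ar (κ₁ :: Γ) κ₂ → LTm α ar Γ (.arr κ₁ κ₂)
  | app {Γ κ₁ κ₂} : LTm α ar Γ (.arr κ₁ κ₂) → LTm α ar Γ κ₁ → LTm α ar Γ κ₂
  | cht {Γ κ} : LTm α ar Γ (.arr κ (.arr κ κ))
  | fix {Γ κ} : LTm α ar Γ (.arr (.arr κ κ) κ)
  | cst {Γ} (a : α) : LTm α ar Γ (tyOfArity (ar a))

/-- Extension of a renaming under a binder. -/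
def extR {Γ Δ : List STy} {κ' : STy} (f : ∀ {κ}, Lk Γ κ → Lk Δ κ) :
    ∀ {κ}, Lk (κ' :: Γ) κ → Lk (κ' :: Δ) κ
  | _, .hd => .hd
  | _, .tl y => .tl (f y)

/-- Renaming. -/
def LTm.rename {α : Type} {ar : α → Nat} :
    ∀ {Γ Δ : List STy} {κ}, (∀ {κ'}, Lk Γ κ' → Lk Δ κ') →
      LTm α ar Γ κ → LTm α ar Δ κ
  | _, _, _, f, .var x => .var (f x)
  | _, _, _, f, .lam b => .lam (b.rename (fun {_} x => extR (fun y => f y) x))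
  | _, _, _, f, .app s t => .app (s.rename f) (t.rename f)
  | _, _, _, _, .cht => .cht
  | _, _, _, _, .fix => .fix
  | _, _, _, _, .cst a => .cst a

/-- Extension of a substitution under a binder. -/
def extS {α : Type} {ar : α → Nat} {Γ Δ : List STy} {κ' : STy}
    (σ : ∀ {κ}, Lk Γ κ → LTm α ar Δ κ) :
    ∀ {κ}, Lk (κ' :: Γ) κ → LTm α ar (κ' :: Δ) κ
  | _, .hd => .var .hd
  | _, .tl y => (σ y).rename (fun z => .tl z)

/-- Simultaneous substitution. -/
def LTm.subs {α : Type} {ar : α → Nat} :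
    ∀ {Γ Δ : List STy} {κ}, (∀ {κ'}, Lk Γ κ' → LTm α ar Δ κ') →
      LTm α ar Γ κ → LTm α ar Δ κ
  | _, _, _, σ, .var x => σ x
  | _, _, _, σ, .lam b => .lam (b.subs (fun {_} x => extS (fun y => σ y) x))
  | _, _, _, σ, .app s t => .app (s.subs σ) (t.subs σ)
  | _, _, _, _, .cht => .cht
  | _, _, _, _, .fix => .fix
  | _, _, _, _, .cst a => .cst a

/-- The substitution sending the last-bound variable to t. -/
def varCase {α : Type} {ar : α → Nat} {Γ : List STy} {κ₁ : STy}
    (t : LTm α ar Γ κ₁) : ∀ {κ}, Lk (κ₁ :: Γ) κ → LTm α ar Γ κ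
  | _, .hd => t
  | _, .tl y => .var y

/-- Substitution of a single term for the last-bound variable. -/
def subst1 {α : Type} {ar : α → Nat} {Γ : List STy} {κ₁ κ₂ : STy}
    (t : LTm α ar Γ κ₁) (b : LTm α ar (κ₁ :: Γ) κ₂) : LTm α ar Γ κ₂ :=
  b.subs (fun {_} x => varCase t x)

/-- The head of the term is a tree constructor. -/
inductive ConstHead {α : Type} {ar : α → Nat} :
    ∀ {Γ κ}, LTm α ar Γ κ → Prop where
  | cst {Γ a} : ConstHead (Γ := Γ) (.cst a)
  | app {Γ κ₁ κ₂} {s : LTm α ar Γ (.arr κ₁ κ₂)} {t} :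
      ConstHead s → ConstHead (.app s t)

/-- Call-by-name non-deterministic reduction of closed λY-terms: β-reduction,
    Y f → f (Y f), resolution of choices, reduction of the head, and reduction
    of the arguments of a tree constructor. -/
inductive LRed {α : Type} {ar : α → Nat} :
    ∀ {κ}, LTm α ar [] κ → LTm α ar [] κ → Prop where
  | beta {κ₁ κ₂} {b : LTm α ar [κ₁] κ₂} {t} :
      LRed (.app (.lam b) t) (subst1 t b)
  | fixR {κ} {f : LTm α ar [] (.arr κ κ)} :
      LRed (.app .fix f) (.app f (.app .fix f))
  | chL {κ} {s t : LTm α ar [] κ} : LRed (.app (.app .cht s) t) s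
  | chR {κ} {s t : LTm α ar [] κ} : LRed (.app (.app .cht s) t) t
  | appL {κ₁ κ₂} {s s' : LTm α ar [] (.arr κ₁ κ₂)} {t} :
      LRed s s' → LRed (.app s t) (.app s' t)
  | appR {κ₁ κ₂} {s : LTm α ar [] (.arr κ₁ κ₂)} {t t'} :
      ConstHead s → LRed t t' → LRed (.app s t) (.app s t')

/-- Many-step reduction. -/
def LRedStar {α : Type} {ar : α → Nat} {κ : STy} :
    LTm α ar [] κ → LTm α ar [] κ → Prop :=
  Relation.ReflTransGen LRed

/-- Trees over the ranked alphabet (α, ar). -/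
inductive GTree (α : Type) (ar : α → Nat) : Type where
  | mk (a : α) (f : Fin (ar a) → GTree α ar)

/-- Full application of a term of sort o^n → o to n arguments. -/
def appN {α : Type} {ar : α → Nat} :
    ∀ n, LTm α ar [] (tyOfArity n) → (Fin n → LTm α ar [] .o) →
      LTm α ar [] .o
  | 0, t, _ => t
  | n + 1, t, f => appN n (.app t (f 0)) (fun i => f i.succ)

/-- A tree as a closed term of base sort. -/
def GTree.toTm {α : Type} {ar : α → Nat} : GTree α ar → LTm α ar [] .o
  | .mk a f => appN (ar a) (.cst a) (fun i => (f i).toTm)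

section
variable {α : Type} {ar : α → Nat} (br e : α)
  (hbr : ar br = 2) (he : ar e = 0)

/-- The tree br π₁ π₂. -/
def brT (π₁ π₂ : GTree α ar) : GTree α ar :=
  .mk br (fun i => if (Fin.cast hbr i : Fin 2) = 0 then π₁ else π₂)

/-- The tree e. -/
def eT : GTree α ar := .mk e (fun i => (Fin.cast he i).elim0)

/-- The least congruence ∼ᵥ on trees with π ∼ᵥ br e π and associativity
    of br. -/
inductive SimV : GTree α ar → GTree α ar → Prop where
  | refl (t) : SimV t t
  | symm {t t'} : SimV t t' → SimV t' t
  | trans {t₁ t₂ t₃} : SimV t₁ t₂ → SimV t₂ t₃ → SimV t₁ t₃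
  | eps (t) : SimV t (brT br hbr (eT e he) t)
  | assoc (a b c) : SimV (brT br hbr a (brT br hbr b c))
      (brT br hbr (brT br hbr a b) c)
  | congr {a f g} : (∀ i, SimV (f i) (g i)) → SimV (.mk a f) (.mk a g)

end

/-- foldArr [κ₁,…,κ_n] κ = κ₁ → ⋯ → κ_n → κ (κ₁ is the outermost binder). -/
def foldArr : List STy → STy → STy
  | [], κ => κ
  | κ' :: Γ, κ => foldArr Γ (.arr κ' κ)

/-- λ-closure λx₁…λx_n.u of an open term. -/
def closeTm {α : Type} {ar : α → Nat} {κ : STy} :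
    ∀ Γ, LTm α ar Γ κ → LTm α ar [] (foldArr Γ κ)
  | [], t => t
  | _ :: Γ, t => closeTm Γ (.lam t)

/-- A list of closed argument terms fully consuming a sort. -/
inductive Args (α : Type) (ar : α → Nat) : STy → Type where
  | nil : Args α ar .o
  | cons {κ₁ κ₂} : LTm α ar [] κ₁ → Args α ar κ₂ → Args α ar (.arr κ₁ κ₂)

/-- Full application of a closed term to a list of closed arguments. -/
def applyArgs {α : Type} {ar : α → Nat} :
    ∀ {κ}, LTm α ar [] κ → Args α ar κ → LTm α ar [] .o
  | _, t, .nil => t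
  | _, t, .cons u as => applyArgs (.app t u) as

/-- The observational preorder u ≲ u': every tree reachable from C(λx̄.u), for
    any closing context C of base sort, is matched up to ∼ᵥ by a tree reachable
    from C(λx̄.u'). -/
def ObsLe {α : Type} {ar : α → Nat} (br e : α) (hbr : ar br = 2)
    (he : ar e = 0) {Γ : List STy} {κ : STy} (u u' : LTm α ar Γ κ) : Prop :=
  ∀ (C : LTm α ar [] (.arr (foldArr Γ κ) .o)) (π : GTree α ar),
    LRedStar (.app C (closeTm Γ u)) π.toTm →
    ∃ π', LRedStar (.app C (closeTm Γ u')) π'.toTm ∧ SimV br e hbr he π π'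

/-!
The direction from contexts to arguments takes the context `λx. x U₁ ⋯ U_ℓ`. For the converse,
fix a transitive relation `R` on trees compatible with the tree constructors (for instance `∼ᵥ`)
and define a step-indexed logical relation `LogRel R n κ`: at base sort, every tree reached from
the left term in at most `n` steps is matched up to `R` by a tree reached from the right term;
at arrow sorts, related arguments give related applications. The fundamental lemma
`logRel_subs` makes every closed term related to itself; the step index is what lets `Y` through,
since unfolding `Y f` costs a step and so calls for `f` only at smaller indices. Composing on
the right with the applicative preorder `AppLe R` preserves the relation, so `AppLe R M M'` makes
`M` and `M'` related, and then `C M` and `C M'` at the length of any reduction of `C M` to a tree.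
-/

namespace LTm

variable {α : Type} {ar : α → Nat}

theorem rename_congr {Γ Δ κ} (t : LTm α ar Γ κ) {f g : ∀ {κ'}, Lk Γ κ' → Lk Δ κ'}
    (h : ∀ κ' (x : Lk Γ κ'), f x = g x) : t.rename f = t.rename g := by
  induction t generalizing Δ with
  | var x => exact congrArg var (h _ x)
  | lam b ih =>
    refine congrArg lam (ih fun _ x => ?_)
    cases x <;> simp [extR, h]
  | app s t ihs iht => simp only [LTm.rename, ihs h, iht h]
  | cht | fix | cst => rfl

theorem subs_congr {Γ Δ κ} (t : LTm α ar Γ κ) {σ τ : ∀ {κ'}, Lk Γ κ' → LTm α ar Δ κ'}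
    (h : ∀ κ' (x : Lk Γ κ'), σ x = τ x) : t.subs σ = t.subs τ := by
  induction t generalizing Δ with
  | var x => exact h _ x
  | lam b ih =>
    refine congrArg lam (ih fun _ x => ?_)
    cases x <;> simp [extS, h]
  | app s t ihs iht => simp only [LTm.subs, ihs h, iht h]
  | cht | fix | cst => rfl

theorem rename_rename {Γ Δ Θ κ} (t : LTm α ar Γ κ) (f : ∀ {κ'}, Lk Γ κ' → Lk Δ κ')
    (g : ∀ {κ'}, Lk Δ κ' → Lk Θ κ') :
    (t.rename f).rename g = t.rename fun x => g (f x) := by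
  induction t generalizing Δ Θ with
  | var x => rfl
  | lam b ih =>
    refine congrArg lam ((ih _ _).trans (rename_congr b fun _ x => ?_))
    cases x <;> rfl
  | app s t ihs iht => simp only [LTm.rename, ihs, iht]
  | cht | fix | cst => rfl

theorem subs_rename {Γ Δ Θ κ} (t : LTm α ar Γ κ) (f : ∀ {κ'}, Lk Γ κ' → Lk Δ κ')
    (σ : ∀ {κ'}, Lk Δ κ' → LTm α ar Θ κ') :
    (t.rename f).subs σ = t.subs fun x => σ (f x) := by
  induction t generalizing Δ Θ with
  | var x => rfl
  | lam b ih =>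
    refine congrArg lam ((ih _ _).trans (subs_congr b fun _ x => ?_))
    cases x <;> rfl
  | app s t ihs iht => simp only [LTm.rename, LTm.subs, ihs, iht]
  | cht | fix | cst => rfl

theorem rename_subs {Γ Δ Θ κ} (t : LTm α ar Γ κ) (σ : ∀ {κ'}, Lk Γ κ' → LTm α ar Δ κ')
    (g : ∀ {κ'}, Lk Δ κ' → Lk Θ κ') :
    (t.subs σ).rename g = t.subs fun x => (σ x).rename g := by
  induction t generalizing Δ Θ with
  | var x => rfl
  | lam b ih =>
    refine congrArg lam ((ih _ _).trans (subs_congr b fun _ x => ?_))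
    cases x with
    | hd => rfl
    | tl y => exact (rename_rename _ _ _).trans (rename_rename (σ y) g fun z => .tl z).symm
  | app s t ihs iht => simp only [LTm.rename, LTm.subs, ihs, iht]
  | cht | fix | cst => rfl

theorem subs_subs {Γ Δ Θ κ} (t : LTm α ar Γ κ) (σ : ∀ {κ'}, Lk Γ κ' → LTm α ar Δ κ')
    (τ : ∀ {κ'}, Lk Δ κ' → LTm α ar Θ κ') :
    (t.subs σ).subs τ = t.subs fun x => (σ x).subs τ := by
  induction t generalizing Δ Θ with
  | var x => rfl
  | lam b ih =>
    refine congrArg lam ((ih _ _).trans (subs_congr b fun _ x => ?_))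
    cases x with
    | hd => rfl
    | tl y => exact (subs_rename _ _ _).trans (rename_subs _ _ _).symm
  | app s t ihs iht => simp only [LTm.subs, ihs, iht]
  | cht | fix | cst => rfl

theorem subs_var {Γ κ} (t : LTm α ar Γ κ) : t.subs (fun x => var x) = t := by
  induction t with
  | var x => rfl
  | lam b ih =>
    refine congrArg lam ((subs_congr b fun _ x => ?_).trans ih)
    cases x <;> rfl
  | app s t ihs iht => simp only [LTm.subs, ihs, iht]
  | cht | fix | cst => rfl

theorem subs_of_closed {κ} (t : LTm α ar [] κ) (σ : ∀ {κ'}, Lk [] κ' → LTm α ar [] κ') :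
    t.subs σ = t :=
  (subs_congr t fun _ x => nomatch x).trans (subs_var t)

def weaken {Δ κ} (t : LTm α ar [] κ) : LTm α ar Δ κ := t.rename fun (x : Lk [] _) => nomatch x

theorem subst1_weaken {τ κ} (N : LTm α ar [] τ) (t : LTm α ar [] κ) : subst1 N t.weaken = t :=
  (subs_rename _ _ _).trans (subs_of_closed _ _)

def consSubst {Γ κ₁} (s : LTm α ar [] κ₁) (σ : ∀ {κ'}, Lk Γ κ' → LTm α ar [] κ') :
    ∀ {κ'}, Lk (κ₁ :: Γ) κ' → LTm α ar [] κ'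
  | _, .hd => s
  | _, .tl y => σ y

theorem subst1_subs_extS {Γ κ₁ κ₂} (b : LTm α ar (κ₁ :: Γ) κ₂) (s : LTm α ar [] κ₁)
    (σ : ∀ {κ'}, Lk Γ κ' → LTm α ar [] κ') :
    subst1 s (b.subs fun x => extS σ x) = b.subs fun x => consSubst s σ x := by
  refine (subs_subs _ _ _).trans (subs_congr b fun _ x => ?_)
  cases x with
  | hd => rfl
  | tl y => exact (subs_rename _ _ _).trans (subs_var _)

def applyWeakened {τ} : ∀ {κ}, LTm α ar [τ] κ → Args α ar κ → LTm α ar [τ] .o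
  | _, t, .nil => t
  | _, t, .cons u as => applyWeakened (.app t u.weaken) as

theorem subst1_applyWeakened {τ κ} (N : LTm α ar [] τ) (t : LTm α ar [τ] κ) (as : Args α ar κ) :
    subst1 N (applyWeakened t as) = applyArgs (subst1 N t) as := by
  induction as with
  | nil => rfl
  | cons u as ih =>
    rw [applyWeakened, ih]
    exact congrArg (fun w => applyArgs (.app (subst1 N t) w) as) (LTm.subst1_weaken N u)

end LTm

section Reduction

variable {α : Type} {ar : α → Nat}

def LTm.headConst : ∀ {Γ κ}, LTm α ar Γ κ → Option α
  | _, _, .app s _ => headConst s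
  | _, _, .cst a => some a
  | _, _, _ => none

theorem ConstHead.headConst_ne_none {Γ κ} {t : LTm α ar Γ κ} (h : ConstHead t) :
    t.headConst ≠ none := by
  induction h with
  | cst => simp [LTm.headConst]
  | app _ ih => exact ih

theorem headConst_appN (n) (t : LTm α ar [] (tyOfArity n)) (g : Fin n → LTm α ar [] .o) :
    (appN n t g).headConst = t.headConst := by
  induction n with
  | zero => rfl
  | succ n ih => exact ih _ _

theorem appN_injective {n} {t t' : LTm α ar [] (tyOfArity n)} {g g' : Fin n → LTm α ar [] .o}
    (h : appN n t g = appN n t' g') : t = t' ∧ g = g' := by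
  induction n with
  | zero => exact ⟨h, funext fun i => i.elim0⟩
  | succ n ih =>
    obtain ⟨happ, hg⟩ := ih h
    injection happ with _ _ _ ht hs
    exact ⟨ht, funext fun i => Fin.cases hs (fun i => congrFun hg i) i⟩

theorem ConstHead.lRed_app {κ₁ κ₂} {t : LTm α ar [] (.arr κ₁ κ₂)} {s : LTm α ar [] κ₁} {v}
    (hc : ConstHead t) (h : LRed (.app t s) v) :
    (∃ w, LRed t w ∧ v = .app w s) ∨ ∃ s₁, LRed s s₁ ∧ v = .app t s₁ := by
  cases h with
  | appL h => exact .inl ⟨_, h, rfl⟩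
  | appR _ h => exact .inr ⟨_, h, rfl⟩
  | _ => exact (hc.headConst_ne_none rfl).elim

theorem ConstHead.of_lRed {κ} {t v : LTm α ar [] κ} (hc : ConstHead t) (h : LRed t v) :
    ConstHead v := by
  induction hc with
  | cst => cases h
  | app hs ih =>
    rcases hs.lRed_app h with ⟨w, hw, rfl⟩ | ⟨s₁, -, rfl⟩
    exacts [.app (ih hw), .app hs]

theorem ConstHead.of_lRedStar {κ} {t v : LTm α ar [] κ} (hc : ConstHead t) (h : LRedStar t v) :
    ConstHead v := by
  induction h with
  | refl => exact hc
  | tail _ h ih => exact ih.of_lRed h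

theorem ConstHead.app_normal {κ₁ κ₂} {t : LTm α ar [] (.arr κ₁ κ₂)} {u : LTm α ar [] κ₁}
    (hc : ConstHead t) (ht : ∀ v, ¬ LRed t v) (hu : ∀ v, ¬ LRed u v) :
    ∀ v, ¬ LRed (.app t u) v := by
  intro v h
  rcases hc.lRed_app h with ⟨w, hw, -⟩ | ⟨s₁, hs₁, -⟩
  exacts [ht _ hw, hu _ hs₁]

theorem appN_normal (n) (t : LTm α ar [] (tyOfArity n)) (g : Fin n → LTm α ar [] .o)
    (hc : ConstHead t) (ht : ∀ v, ¬ LRed t v) (hg : ∀ i v, ¬ LRed (g i) v) :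
    ∀ v, ¬ LRed (appN n t g) v := by
  induction n with
  | zero => exact ht
  | succ n ih => exact ih _ _ (.app hc) (hc.app_normal ht (hg 0)) fun i => hg i.succ

theorem GTree.toTm_normal (π : GTree α ar) : ∀ v, ¬ LRed π.toTm v := by
  induction π with
  | mk a f ih => exact appN_normal _ _ _ .cst (fun v h => nomatch h) ih

theorem LRedStar.app_left {κ₁ κ₂} {s s' : LTm α ar [] (.arr κ₁ κ₂)} (t : LTm α ar [] κ₁)
    (h : LRedStar s s') : LRedStar (.app s t) (.app s' t) := by
  induction h with
  | refl => exact .refl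
  | tail _ h ih => exact ih.tail (.appL h)

theorem LRedStar.app_right {κ₁ κ₂} {s : LTm α ar [] (.arr κ₁ κ₂)} {t t' : LTm α ar [] κ₁}
    (hc : ConstHead s) (h : LRedStar t t') : LRedStar (.app s t) (.app s t') := by
  induction h with
  | refl => exact .refl
  | tail _ h ih => exact ih.tail (.appR hc h)

theorem LRedStar.appN (n) {t t' : LTm α ar [] (tyOfArity n)} {g g' : Fin n → LTm α ar [] .o}
    (hc : ConstHead t) (ht : LRedStar t t') (hg : ∀ i, LRedStar (g i) (g' i)) :
    LRedStar (appN n t g) (appN n t' g') := by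
  induction n with
  | zero => exact ht
  | succ n ih =>
    refine ih (.app hc) ?_ fun i => hg i.succ
    exact (ht.app_left _).trans (app_right (hc.of_lRedStar ht) (hg 0))

inductive HeadStep : ∀ {κ}, LTm α ar [] κ → LTm α ar [] κ → Prop where
  | beta {κ₁ κ₂} {b : LTm α ar [κ₁] κ₂} {t} : HeadStep (.app (.lam b) t) (subst1 t b)
  | fixR {κ} {f : LTm α ar [] (.arr κ κ)} : HeadStep (.app .fix f) (.app f (.app .fix f))
  | appL {κ₁ κ₂} {s s' : LTm α ar [] (.arr κ₁ κ₂)} {t} :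
      HeadStep s s' → HeadStep (.app s t) (.app s' t)

inductive ChoiceHead : ∀ {κ}, LTm α ar [] κ → LTm α ar [] κ → LTm α ar [] κ → Prop where
  | base {κ} {s t : LTm α ar [] κ} : ChoiceHead (.app (.app .cht s) t) s t
  | app {κ₁ κ₂} {c s t : LTm α ar [] (.arr κ₁ κ₂)} {u} :
      ChoiceHead c s t → ChoiceHead (.app c u) (.app s u) (.app t u)

theorem HeadStep.lRed {κ} {t t₀ : LTm α ar [] κ} (h : HeadStep t t₀) : LRed t t₀ := by
  induction h with
  | beta => exact .beta
  | fixR => exact .fixR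
  | appL _ ih => exact .appL ih

theorem ConstHead.not_headStep {κ} {t t₀ : LTm α ar [] κ} (hc : ConstHead t) :
    ¬ HeadStep t t₀ := by
  intro h
  induction h with
  | appL _ ih => cases hc with | app hc => exact ih hc
  | _ => exact hc.headConst_ne_none rfl

theorem HeadStep.eq_of_lRed {κ} {t t₀ v : LTm α ar [] κ} (h : HeadStep t t₀) (hv : LRed t v) :
    v = t₀ := by
  induction h with
  | beta =>
    cases hv with
    | beta => rfl
    | appL h => cases h
    | appR hc _ => exact (hc.headConst_ne_none rfl).elim
  | fixR =>
    cases hv with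
    | fixR => rfl
    | appL h => cases h
    | appR hc _ => exact (hc.headConst_ne_none rfl).elim
  | appL h ih =>
    cases hv with
    | appL hv => rw [ih hv]
    | appR hc _ => exact (hc.not_headStep h).elim
    | beta | fixR => cases h
    | chL | chR => cases h with | appL h => cases h

theorem HeadStep.lRedStar_toTm {t t₀ : LTm α ar [] .o} {π : GTree α ar}
    (h : HeadStep t t₀) (hr : LRedStar t π.toTm) : LRedStar t₀ π.toTm := by
  rcases hr.cases_head with rfl | ⟨w, hw, hr⟩
  · exact (π.toTm_normal _ h.lRed).elim
  · rwa [← h.eq_of_lRed hw]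

theorem ChoiceHead.lRed_left {κ} {c s t : LTm α ar [] κ} (h : ChoiceHead c s t) : LRed c s := by
  induction h with
  | base => exact .chL
  | app _ ih => exact .appL ih

theorem ChoiceHead.lRed_right {κ} {c s t : LTm α ar [] κ} (h : ChoiceHead c s t) : LRed c t := by
  induction h with
  | base => exact .chR
  | app _ ih => exact .appL ih

theorem ChoiceHead.headConst_eq_none {κ} {c s t : LTm α ar [] κ} (h : ChoiceHead c s t) :
    c.headConst = none := by
  induction h with
  | base => rfl
  | app _ ih => exact ih

theorem ChoiceHead.eq_or_eq_of_lRed {κ} {c s t v : LTm α ar [] κ} (h : ChoiceHead c s t)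
    (hv : LRed c v) : v = s ∨ v = t := by
  induction h with
  | base =>
    cases hv with
    | chL => exact .inl rfl
    | chR => exact .inr rfl
    | appL h =>
      cases h with
      | appL h => cases h
      | appR hc _ => exact (hc.headConst_ne_none rfl).elim
    | appR hc _ => exact (hc.headConst_ne_none rfl).elim
  | app h ih =>
    cases hv with
    | appL hv => rcases ih hv with rfl | rfl <;> simp
    | appR hc _ => exact (hc.headConst_ne_none h.headConst_eq_none).elim
    | beta | fixR => cases h
    | chL | chR => cases h with | app h => cases h

def LRedN : ℕ → ∀ {κ}, LTm α ar [] κ → LTm α ar [] κ → Prop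
  | 0, _, t, t' => t = t'
  | n + 1, _, t, t'' => ∃ t', LRed t t' ∧ LRedN n t' t''

theorem LRedStar.exists_lRedN {κ} {t t' : LTm α ar [] κ} (h : LRedStar t t') :
    ∃ n, LRedN n t t' := by
  induction h using Relation.ReflTransGen.head_induction_on with
  | refl => exact ⟨0, rfl⟩
  | head h _ ih =>
    obtain ⟨n, hn⟩ := ih
    exact ⟨n + 1, _, h, hn⟩

theorem LRedN.exists_succ_of_lRed {m} {t v : LTm α ar [] .o} {π : GTree α ar}
    (hr : LRedN m t π.toTm) (h : LRed t v) :
    ∃ k w, m = k + 1 ∧ LRed t w ∧ LRedN k w π.toTm := by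
  cases m with
  | zero =>
    obtain rfl : t = π.toTm := hr
    exact (π.toTm_normal _ h).elim
  | succ k => exact ⟨k, hr.choose, rfl, hr.choose_spec⟩

end Reduction

section LogicalRelation

variable {α : Type} {ar : α → Nat} (R : GTree α ar → GTree α ar → Prop)

def GTree.Compatible : Prop :=
  ∀ a f g, (∀ i, R (f i) (g i)) → R (.mk a f) (.mk a g)

def SimUpTo (n : ℕ) (t t' : LTm α ar [] .o) : Prop :=
  ∀ m ≤ n, ∀ π : GTree α ar, LRedN m t π.toTm → ∃ π', LRedStar t' π'.toTm ∧ R π π'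

def LogRel : ℕ → ∀ κ, LTm α ar [] κ → LTm α ar [] κ → Prop
  | n, .o, t, t' => SimUpTo R n t t'
  | n, .arr κ₁ κ₂, t, t' =>
      ∀ m ≤ n, ∀ s s', LogRel m κ₁ s s' → LogRel m κ₂ (.app t s) (.app t' s')

inductive ConstRel (n : ℕ) : ∀ j, LTm α ar [] (tyOfArity j) → LTm α ar [] (tyOfArity j) → Prop where
  | cst (a : α) : ConstRel n (ar a) (.cst a) (.cst a)
  | app {j t t' s s'} : ConstRel n (j + 1) t t' → SimUpTo R n s s' →
      ConstRel n j (.app t s) (.app t' s')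

def AppLe {κ} (t t' : LTm α ar [] κ) : Prop :=
  ∀ (as : Args α ar κ) (π : GTree α ar), LRedStar (applyArgs t as) π.toTm →
    ∃ π', LRedStar (applyArgs t' as) π'.toTm ∧ R π π'

def ContextLe {κ} (t t' : LTm α ar [] κ) : Prop :=
  ∀ (C : LTm α ar [] (.arr κ .o)) (π : GTree α ar), LRedStar (.app C t) π.toTm →
    ∃ π', LRedStar (.app C t') π'.toTm ∧ R π π'

variable {R}

theorem SimUpTo.mono {n m} (hmn : m ≤ n) {t t'} (h : SimUpTo R n t t') : SimUpTo R m t t' :=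
  fun k hk => h k (hk.trans hmn)

theorem SimUpTo.of_lRed {n} {t t₁ t' : LTm α ar [] .o} (h : SimUpTo R (n + 1) t t')
    (ht : LRed t t₁) : SimUpTo R n t₁ t' :=
  fun k hk π hr => h (k + 1) (Nat.succ_le_succ hk) π ⟨t₁, ht, hr⟩

theorem LogRel.mono {κ n m} (hmn : m ≤ n) {t t'} (h : LogRel R n κ t t') : LogRel R m κ t t' := by
  cases κ <;> exact fun k hk => h k (hk.trans hmn)

theorem LogRel.of_headStep {κ} {t t₀ t' : LTm α ar [] κ} (h : HeadStep t t₀) {n}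
    (h₀ : ∀ m < n, LogRel R m κ t₀ t') : LogRel R n κ t t' := by
  induction κ generalizing n with
  | o =>
    intro m hm π hr
    obtain ⟨k, w, rfl, hw, hr⟩ := hr.exists_succ_of_lRed h.lRed
    cases h.eq_of_lRed hw
    exact h₀ k hm k le_rfl π hr
  | arr κ₁ κ₂ _ ih =>
    exact fun m hm s s' hs =>
      ih h.appL fun k hk => h₀ k (hk.trans_le hm) k le_rfl s s' (hs.mono hk.le)

theorem LogRel.of_lRed_right {κ} {t t₁ t' : LTm α ar [] κ} (h : LRed t₁ t') {n}
    (ht : LogRel R n κ t t') : LogRel R n κ t t₁ := by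
  induction κ generalizing n with
  | o =>
    intro m hm π hr
    obtain ⟨π', hred, hR⟩ := ht m hm π hr
    exact ⟨π', .head h hred, hR⟩
  | arr κ₁ κ₂ _ ih => exact fun m hm s s' hs => ih (.appL h) (ht m hm s s' hs)

theorem LogRel.choice {κ} {c c' s t s' t' : LTm α ar [] κ} (hc : ChoiceHead c s t)
    (hc' : ChoiceHead c' s' t') {n} (hs : LogRel R n κ s s') (ht : LogRel R n κ t t') :
    LogRel R n κ c c' := by
  induction κ generalizing n with
  | o =>
    intro m hm π hr
    obtain ⟨k, w, rfl, hw, hr⟩ := hr.exists_succ_of_lRed hc.lRed_left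
    rcases hc.eq_or_eq_of_lRed hw with rfl | rfl
    · obtain ⟨π', hred, hR⟩ := hs k (by omega) π hr
      exact ⟨π', .head hc'.lRed_left hred, hR⟩
    · obtain ⟨π', hred, hR⟩ := ht k (by omega) π hr
      exact ⟨π', .head hc'.lRed_right hred, hR⟩
  | arr κ₁ κ₂ _ ih =>
    exact fun m hm u u' hu => ih hc.app hc'.app (hs m hm u u' hu) (ht m hm u u' hu)

theorem LogRel.fix {κ n} {f f' : LTm α ar [] (.arr κ κ)} (hf : LogRel R n (.arr κ κ) f f') :
    LogRel R n κ (.app .fix f) (.app .fix f') := by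
  induction n using Nat.strong_induction_on with
  | _ n ih =>
    refine of_headStep .fixR fun m hm => of_lRed_right .fixR ?_
    exact hf m hm.le _ _ (ih m hm (hf.mono hm.le))

theorem ConstRel.constHead {n j} {t t' : LTm α ar [] (tyOfArity j)} (h : ConstRel R n j t t') :
    ConstHead t := by
  induction h with
  | cst => exact .cst
  | app _ _ ih => exact .app ih

theorem ConstRel.mono {n m} (hmn : m ≤ n) {j t t'} (h : ConstRel R n j t t') :
    ConstRel R m j t t' := by
  induction h with
  | cst a => exact .cst a
  | app _ hs ih => exact .app ih (hs.mono hmn)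

theorem ConstRel.of_lRed {n j} {t t' v : LTm α ar [] (tyOfArity j)}
    (h : ConstRel R (n + 1) j t t') (hv : LRed t v) : ConstRel R n j v t' := by
  induction h with
  | cst => cases hv
  | app ht hs ih =>
    rcases ht.constHead.lRed_app hv with ⟨w, hw, rfl⟩ | ⟨s₁, hs₁, rfl⟩
    · exact .app (ih hw) (hs.mono n.le_succ)
    · exact .app (ht.mono n.le_succ) (hs.of_lRed hs₁)

theorem ConstRel.of_lRedN {k j m} {t t' v : LTm α ar [] (tyOfArity j)}
    (h : ConstRel R (k + m) j t t') (hv : LRedN m t v) : ConstRel R k j v t' := by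
  induction m generalizing t with
  | zero => exact (show t = v from hv) ▸ h
  | succ m ih =>
    obtain ⟨w, hw, hv⟩ := hv
    exact ih (h.of_lRed hw) hv

theorem ConstRel.exists_lRedStar_toTm (hR : GTree.Compatible R) {q j}
    {t t' : LTm α ar [] (tyOfArity j)} (h : ConstRel R q j t t') {g g' : Fin j → LTm α ar [] .o}
    (hg : ∀ i, SimUpTo R q (g i) (g' i)) {π : GTree α ar} (hπ : appN j t g = π.toTm) :
    ∃ π', LRedStar (appN j t' g') π'.toTm ∧ R π π' := by
  induction h with
  | cst a =>
    obtain ⟨b, f⟩ := π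
    obtain rfl : a = b := by
      simpa [GTree.toTm, headConst_appN, LTm.headConst] using congrArg LTm.headConst hπ
    obtain ⟨-, rfl⟩ := appN_injective hπ
    choose π' hred hR' using fun i => hg i 0 (Nat.zero_le q) (f i) rfl
    exact ⟨.mk a π', LRedStar.appN _ .cst .refl hred, hR a _ _ hR'⟩
  | app _ hs ih => exact ih (g := Fin.cons _ g) (g' := Fin.cons _ g') (Fin.cases hs hg) hπ

theorem ConstRel.logRel (hR : GTree.Compatible R) :
    ∀ {j n} {t t' : LTm α ar [] (tyOfArity j)}, ConstRel R n j t t' →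
      LogRel R n (tyOfArity j) t t'
  | 0, _, _, _, h => fun m hm _ hr =>
    ((h.mono (m.zero_add.trans_le hm)).of_lRedN (k := 0) hr).exists_lRedStar_toTm hR
      (g := Fin.elim0) (g' := Fin.elim0) (fun i => i.elim0) rfl
  | _ + 1, _, _, _, h => fun _ hm _ _ hs => ConstRel.logRel hR (.app (h.mono hm) hs)

theorem logRel_subs (hR : GTree.Compatible R) {Γ κ} (u : LTm α ar Γ κ) {n}
    {σ σ' : ∀ {κ'}, Lk Γ κ' → LTm α ar [] κ'}
    (h : ∀ κ' (x : Lk Γ κ'), LogRel R n κ' (σ x) (σ' x)) :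
    LogRel R n κ (u.subs σ) (u.subs σ') := by
  induction u generalizing n with
  | var x => exact h _ x
  | lam b ih =>
    intro m hm s s' hs
    refine LogRel.of_headStep .beta fun k hk => LogRel.of_lRed_right .beta ?_
    rw [LTm.subst1_subs_extS, LTm.subst1_subs_extS]
    refine ih fun _ x => ?_
    cases x with
    | hd => exact hs.mono hk.le
    | tl y => exact (h _ y).mono (hk.le.trans hm)
  | app s t ihs iht => exact ihs h n le_rfl _ _ (iht h)
  | cht => exact fun _ _ _ _ hs m hm _ _ ht => LogRel.choice .base .base (hs.mono hm) ht
  | fix => exact fun _ _ _ _ hf => LogRel.fix hf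
  | cst a => exact (ConstRel.cst a).logRel hR

theorem LogRel.refl (hR : GTree.Compatible R) {κ} (t : LTm α ar [] κ) (n : ℕ) :
    LogRel R n κ t t := by
  have h := logRel_subs hR t (n := n) (σ := fun x => nomatch x) (σ' := fun x => nomatch x)
    fun _ x => nomatch x
  rwa [LTm.subs_of_closed] at h

theorem LogRel.trans_appLe [IsTrans (GTree α ar) R] {κ n} {t t₁ t' : LTm α ar [] κ}
    (h : LogRel R n κ t t₁) (h₁ : AppLe R t₁ t') : LogRel R n κ t t' := by
  induction κ generalizing n with
  | o =>
    intro m hm π hr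
    obtain ⟨π₁, hred₁, hR₁⟩ := h m hm π hr
    obtain ⟨π', hred, hR⟩ := h₁ .nil π₁ hred₁
    exact ⟨π', hred, _root_.trans hR₁ hR⟩
  | arr κ₁ κ₂ _ ih => exact fun m hm s s' hs => ih (h m hm s s' hs) fun as => h₁ (.cons s' as)

theorem AppLe.contextLe [IsTrans (GTree α ar) R] (hR : GTree.Compatible R) {κ}
    {t t' : LTm α ar [] κ} (h : AppLe R t t') : ContextLe R t t' := by
  intro C π hred
  obtain ⟨m, hm⟩ := hred.exists_lRedN
  exact LogRel.refl hR C m m le_rfl t t' ((LogRel.refl hR t m).trans_appLe h) m le_rfl π hm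

theorem ContextLe.appLe {κ} {t t' : LTm α ar [] κ} (h : ContextLe R t t') : AppLe R t t' := by
  intro as π hred
  have hsubst (N : LTm α ar [] κ) : subst1 N (LTm.applyWeakened (.var .hd) as) = applyArgs N as :=
    LTm.subst1_applyWeakened N _ as
  rw [← hsubst] at hred
  obtain ⟨π', hred', hR⟩ := h (.lam (LTm.applyWeakened (.var .hd) as)) π (.head .beta hred)
  exact ⟨π', hsubst t' ▸ HeadStep.beta.lRedStar_toTm hred', hR⟩

theorem contextLe_iff_appLe [IsTrans (GTree α ar) R] (hR : GTree.Compatible R) {κ}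
    {t t' : LTm α ar [] κ} : ContextLe R t t' ↔ AppLe R t t' :=
  ⟨ContextLe.appLe, AppLe.contextLe hR⟩

end LogicalRelation

instance {α : Type} {ar : α → Nat} (br e : α) (hbr : ar br = 2) (he : ar e = 0) :
    IsTrans (GTree α ar) (SimV br e hbr he) :=
  ⟨fun _ _ _ => SimV.trans⟩

theorem SimV.compatible {α : Type} {ar : α → Nat} (br e : α) (hbr : ar br = 2) (he : ar e = 0) :
    GTree.Compatible (SimV br e hbr he) :=
  fun _ _ _ => SimV.congr

/-- Context lemma for the non-deterministic λY-calculus with tree constants: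
    u ≲ u' holds iff for all closed arguments U₁,…,U_ℓ and every tree π
    reachable from (λx̄.u) U₁ ⋯ U_ℓ there is a tree π' ∼ᵥ π reachable from
    (λx̄.u') U₁ ⋯ U_ℓ. -/
theorem stmt9 {α : Type} {ar : α → Nat} (br e : α) (hbr : ar br = 2)
    (he : ar e = 0) {Γ : List STy} {κ : STy} (u u' : LTm α ar Γ κ) :
    ObsLe br e hbr he u u' ↔
      (∀ (as : Args α ar (foldArr Γ κ)) (π : GTree α ar),
        LRedStar (applyArgs (closeTm Γ u) as) π.toTm →
        ∃ π', LRedStar (applyArgs (closeTm Γ u') as) π'.toTm ∧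
          SimV br e hbr he π π') :=
  contextLe_iff_appLe (SimV.compatible br e hbr he)
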